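/- Let R be a commutative ring, m ∈ R, n ≥ 1, and let a^{(l)}_{i,j} denote the (i,j) entry of T_n(m)^l. Then for all 1 ≤ i ≤ n, l ≥ 1 and p ≥ 0: ∑_{j=1}^n U_{(n-1)p+j-1}·a^{(l)}_{i,j} = U_{(n-1)(l+p)+i-1}. -/
import Mathlib


/-- The generalized Fibonacci sequence with parameter `m`:
`U_0 = 0`, `U_1 = 1`, `U_{e+1} = m U_e + U_{e-1}`. -/
def genFibU {R : Type*} [CommRing R] (m : R) : ℕ → R
  | 0 => 0
  | 1 => 1
  | e + 2 => m * genFibU m (e + 1) + genFibU m e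

/-- The `n × n` generalized Fibonacci matrix `T_n(m)`, with 1-based `(i,j)` entry
`m^{i+j-n-1} C(i-1, n-j)` when `i + j ≥ n + 1` and `0` otherwise. -/
def genFibMatrix {R : Type*} [CommRing R] (m : R) (n : ℕ) :
    Matrix (Fin n) (Fin n) R :=
  Matrix.of fun i j =>
    if n ≤ i.val + j.val + 1 then
      m ^ (i.val + j.val + 1 - n) * (Nat.choose i.val (n - 1 - j.val) : R)
    else 0

lemma genFibU_add_two {R : Type*} [CommRing R] (m : R) (e : ℕ) :
    genFibU m (e + 2) = m * genFibU m (e + 1) + genFibU m e := rfl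

lemma genFib_key {R : Type*} [CommRing R] (m : R) : ∀ (k b : ℕ),
    ∑ u ∈ Finset.range (k + 1), (k.choose u : R) * m ^ u * genFibU m (b + u)
      = genFibU m (b + 2 * k) := by
  intro k
  induction k with
  | zero => intro b; simp
  | succ k ih =>
    intro b
    have h2 : b + 2 * (k + 1) = (b + 2) + 2 * k := by ring
    rw [h2, ← ih (b + 2)]
    have hrhs : ∑ u ∈ Finset.range (k + 1), (k.choose u : R) * m ^ u * genFibU m (b + 2 + u)
        = (∑ u ∈ Finset.range (k + 1), (k.choose u : R) * m ^ (u + 1) * genFibU m (b + u + 1))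
          + ∑ u ∈ Finset.range (k + 1), (k.choose u : R) * m ^ u * genFibU m (b + u) := by
      rw [← Finset.sum_add_distrib]
      refine Finset.sum_congr rfl fun u _ => ?_
      have : b + 2 + u = (b + u) + 2 := by ring
      rw [this, genFibU_add_two]
      ring
    rw [hrhs]
    rw [Finset.sum_range_succ' (fun u => (((k + 1).choose u : ℕ) : R) * m ^ u * genFibU m (b + u)) (k + 1)]
    have hpascal : ∑ u ∈ Finset.range (k + 1),
        (((k + 1).choose (u + 1) : ℕ) : R) * m ^ (u + 1) * genFibU m (b + (u + 1))
        = (∑ u ∈ Finset.range (k + 1), (k.choose u : R) * m ^ (u + 1) * genFibU m (b + u + 1))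
          + ∑ u ∈ Finset.range (k + 1), (k.choose (u + 1) : R) * m ^ (u + 1) * genFibU m (b + u + 1) := by
      rw [← Finset.sum_add_distrib]
      refine Finset.sum_congr rfl fun u _ => ?_
      have hb : b + (u + 1) = b + u + 1 := by omega
      rw [hb, Nat.choose_succ_succ]
      simp only [Nat.succ_eq_add_one]
      push_cast
      ring
    rw [hpascal]
    have hS2 : ∑ u ∈ Finset.range (k + 1), (k.choose u : R) * m ^ u * genFibU m (b + u)
        = (∑ u ∈ Finset.range (k + 1), (k.choose (u + 1) : R) * m ^ (u + 1) * genFibU m (b + u + 1))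
          + (((k.choose 0 : ℕ) : R) * m ^ 0 * genFibU m (b + 0)) := by
      rw [Finset.sum_range_succ' (fun u => ((k.choose u : ℕ) : R) * m ^ u * genFibU m (b + u)) k]
      rw [Finset.sum_range_succ (fun u => ((k.choose (u+1) : ℕ) : R) * m ^ (u+1) * genFibU m (b + u + 1)) k]
      simp only [Nat.choose_succ_self, Nat.cast_zero, zero_mul, add_zero, ← add_assoc]
    rw [hS2]
    simp
    ring

lemma genFib_rowA {R : Type*} [CommRing R] (m : R) (n : ℕ) (k : Fin n) (K : ℕ) :
    ∑ j : Fin n, genFibU m (K + j.val) * genFibMatrix m n k j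
      = genFibU m (K + (n - 1) + k.val) := by
  obtain ⟨a, ha⟩ : ∃ a, n = a + (k.val + 1) := ⟨n - (k.val + 1), by omega⟩
  have hsum : ∑ j : Fin n, genFibU m (K + j.val) * genFibMatrix m n k j
      = ∑ j ∈ Finset.range n, genFibU m (K + j) *
          (if n ≤ k.val + j + 1 then
            m ^ (k.val + j + 1 - n) * (Nat.choose k.val (n - 1 - j) : R) else 0) := by
    rw [← Fin.sum_univ_eq_sum_range (fun j => genFibU m (K + j) *
          (if n ≤ k.val + j + 1 then
            m ^ (k.val + j + 1 - n) * (Nat.choose k.val (n - 1 - j) : R) else 0)) n]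
    exact Finset.sum_congr rfl fun j _ => rfl
  rw [hsum]
  obtain ⟨kv, hkv⟩ : ∃ kv, kv = k.val := ⟨k.val, rfl⟩
  rw [← hkv] at ha ⊢
  subst ha
  rw [Finset.sum_range_add]
  have h1 : ∑ j ∈ Finset.range a, genFibU m (K + j) *
      (if a + (kv + 1) ≤ kv + j + 1 then
        m ^ (kv + j + 1 - (a + (kv + 1))) *
          (Nat.choose kv (a + (kv + 1) - 1 - j) : R) else 0) = 0 := by
    refine Finset.sum_eq_zero fun j hj => ?_
    rw [Finset.mem_range] at hj
    rw [if_neg (by omega)]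
    ring
  rw [h1, zero_add]
  have h2 : ∑ u ∈ Finset.range (kv + 1), genFibU m (K + (a + u)) *
      (if a + (kv + 1) ≤ kv + (a + u) + 1 then
        m ^ (kv + (a + u) + 1 - (a + (kv + 1))) *
          (Nat.choose kv (a + (kv + 1) - 1 - (a + u)) : R) else 0)
      = ∑ u ∈ Finset.range (kv + 1),
          (Nat.choose kv u : R) * m ^ u * genFibU m ((K + a) + u) := by
    refine Finset.sum_congr rfl fun u hu => ?_
    rw [Finset.mem_range] at hu
    rw [if_pos (by omega)]
    rw [show kv + (a + u) + 1 - (a + (kv + 1)) = u from by omega]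
    rw [show a + (kv + 1) - 1 - (a + u) = kv - u from by omega]
    rw [Nat.choose_symm (by omega : u ≤ kv)]
    rw [show K + (a + u) = K + a + u from by omega]
    ring
  rw [h2, genFib_key m kv (K + a)]
  congr 1
  omega

/-- For all `i`, `l ≥ 1`, `p ≥ 0` (1-based row index `i`):
`∑_{j=1}^n U_{(n-1)p+j-1} a^{(l)}_{i,j} = U_{(n-1)(l+p)+i-1}`. -/
theorem genFibMatrix_pow_row_sum {R : Type*} [CommRing R] (m : R) (n : ℕ) (hn : 1 ≤ n) :
    ∀ i : Fin n, ∀ l p : ℕ, 1 ≤ l →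
      ∑ j : Fin n, genFibU m ((n - 1) * p + j.val) * ((genFibMatrix m n) ^ l) i j =
        genFibU m ((n - 1) * (l + p) + i.val) := by
  intro i l p hl
  induction l, hl using Nat.le_induction generalizing p with
  | base =>
    rw [pow_one]
    rw [genFib_rowA m n i ((n - 1) * p),
      show (n - 1) * (1 + p) = (n - 1) * p + (n - 1) from by ring]
  | succ l hl ih =>
    have hpow : (genFibMatrix m n) ^ (l + 1) = (genFibMatrix m n) ^ l * genFibMatrix m n :=
      pow_succ _ _
    rw [hpow]
    have hexp : ∑ j : Fin n, genFibU m ((n - 1) * p + j.val) *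
        ((genFibMatrix m n) ^ l * genFibMatrix m n) i j
        = ∑ k : Fin n, ((genFibMatrix m n) ^ l) i k *
            ∑ j : Fin n, genFibU m ((n - 1) * p + j.val) * genFibMatrix m n k j := by
      simp only [Matrix.mul_apply, Finset.mul_sum, Finset.sum_mul]
      rw [Finset.sum_comm]
      refine Finset.sum_congr rfl fun k _ => Finset.sum_congr rfl fun j _ => ?_
      ring
    rw [hexp]
    have hrow : ∀ k : Fin n, ∑ j : Fin n, genFibU m ((n - 1) * p + j.val) * genFibMatrix m n k j
        = genFibU m ((n - 1) * (p + 1) + k.val) := by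
      intro k
      rw [genFib_rowA m n k ((n - 1) * p),
        show (n - 1) * (p + 1) = (n - 1) * p + (n - 1) from by ring]
    simp only [hrow]
    rw [show (n - 1) * (l + 1 + p) = (n - 1) * (l + (p + 1)) from by ring]
    rw [← ih (p + 1)]
    exact Finset.sum_congr rfl fun k _ => mul_comm _ _
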